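/- arXiv:1510.07087 — 8 statements merged into one kernel-verified Lean document; each statement's English description precedes it below -/
import Mathlib

section
/- Let n be a natural number and let x, y be vectors in Euclidean space ℝⁿ with 1 ≤ ‖x‖ and ‖x‖ ≤ ‖y‖ (Euclidean norm). Then ‖ x/‖x‖ − y/‖y‖ ‖ ≤ ‖x − y‖ / ‖x‖. -/
/-!
Scale `x` and `y` by `‖x‖`: the left-hand side becomes `‖x - z‖ / ‖x‖`, where `z` is the point
of the ray through `y` on the sphere of radius `‖x‖`. Since `y = c • z` with `c ≥ 1` and
`⟪x - z, z⟫ = ⟪x, z⟫ - ‖z‖² ≤ 0`, moving `z` outward along its ray to `y` can only increase the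
distance to `x`.
-/

section RadialProjection

variable {E : Type*} [NormedAddCommGroup E] [InnerProductSpace ℝ E]

theorem norm_sub_le_norm_sub_smul_of_norm_eq {x z : E} (hxz : ‖x‖ = ‖z‖) {c : ℝ} (hc : 1 ≤ c) :
    ‖x - z‖ ≤ ‖x - c • z‖ := by
  have hinner : inner ℝ (x - z) z ≤ 0 := by
    rw [inner_sub_left, real_inner_self_eq_norm_sq]
    have := real_inner_le_norm x z
    rw [hxz, ← sq] at this
    linarith
  have hsplit : x - c • z = (x - z) - (c - 1) • z := by
    rw [sub_smul, one_smul]; abel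
  have hsq : ‖x - z‖ ^ 2 ≤ ‖x - c • z‖ ^ 2 := by
    rw [hsplit, norm_sub_sq_real (x - z), real_inner_smul_right]
    linarith [mul_nonpos_of_nonneg_of_nonpos (sub_nonneg.2 hc) hinner, sq_nonneg ‖(c - 1) • z‖]
  exact (pow_le_pow_iff_left₀ (norm_nonneg _) (norm_nonneg _) two_ne_zero).mp hsq

theorem norm_mul_norm_sub_normalize_le {x y : E} (hx : 0 < ‖x‖) (hxy : ‖x‖ ≤ ‖y‖) :
    ‖x‖ * ‖‖x‖⁻¹ • x - ‖y‖⁻¹ • y‖ ≤ ‖x - y‖ := by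
  have hy : 0 < ‖y‖ := hx.trans_le hxy
  set z := (‖x‖ / ‖y‖) • y with hz
  have hnorm_z : ‖x‖ = ‖z‖ := by
    rw [hz, norm_smul, Real.norm_of_nonneg (by positivity), div_mul_cancel₀ _ hy.ne']
  have hy_eq : y = (‖y‖ / ‖x‖) • z := by
    rw [hz, smul_smul, div_mul_div_comm, mul_comm ‖y‖, div_self (by positivity), one_smul]
  have hscale : ‖x‖ • (‖x‖⁻¹ • x - ‖y‖⁻¹ • y) = x - z := by
    rw [smul_sub, smul_smul, smul_smul, mul_inv_cancel₀ hx.ne', one_smul, hz, div_eq_mul_inv]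
  calc ‖x‖ * ‖‖x‖⁻¹ • x - ‖y‖⁻¹ • y‖ = ‖x - z‖ := by
        rw [← hscale, norm_smul, norm_norm]
    _ ≤ ‖x - y‖ := by
        conv_rhs => rw [hy_eq]
        exact norm_sub_le_norm_sub_smul_of_norm_eq hnorm_z ((one_le_div hx).mpr hxy)

end RadialProjection

/-- Sharpened inequality established inside the proof of the Projection Lemma. -/
theorem projection_lemma_sharp (n : ℕ) (x y : EuclideanSpace ℝ (Fin n))
    (hx : 1 ≤ ‖x‖) (hxy : ‖x‖ ≤ ‖y‖) :
    ‖‖x‖⁻¹ • x - ‖y‖⁻¹ • y‖ ≤ ‖x - y‖ / ‖x‖ := by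
  have hx₀ : 0 < ‖x‖ := one_pos.trans_le hx
  rw [le_div_iff₀ hx₀, mul_comm]
  exact norm_mul_norm_sub_normalize_le hx₀ hxy
end

section
/- Let n, m, k, l be natural numbers, let G be an n×m complex matrix, let V be an n×k complex matrix with Vᴴ V = I, and let W be an m×l complex matrix with Wᴴ W = I. Then, in the L2 operator norm (spectral norm), ‖G − V Vᴴ G W Wᴴ‖² ≤ ‖G − V Vᴴ G‖² + ‖Gᴴ − W Wᴴ Gᴴ‖². -/
open Matrix

/-- The L2 operator norm (spectral norm) of a rectangular complex matrix,
i.e. the operator norm of the induced linear map between Euclidean spaces. -/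
noncomputable def l2OpNorm {n m : ℕ} (A : Matrix (Fin n) (Fin m) ℂ) : ℝ :=
  ‖LinearMap.toContinuousLinearMap (Matrix.toEuclideanLin A)‖

/-!
Write `X := G - G W Wᴴ`. Then `G - V Vᴴ G W Wᴴ = (G - V Vᴴ G) + V (Vᴴ X)`, and since `Vᴴ V = 1` the
two summands have orthogonal column spaces, `(G - V Vᴴ G)ᴴ V = 0`. For matrices with
`Aᴴ B = 0` the C⋆-identity `‖Mᴴ M‖ = ‖M‖²` gives the Pythagorean bound
`‖A + B‖² = ‖Aᴴ A + Bᴴ B‖ ≤ ‖A‖² + ‖B‖²`. Finally the isometry `V` has norm at most one, so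
`‖V (Vᴴ X)‖ ≤ ‖X‖ = ‖Xᴴ‖ = ‖Gᴴ - W Wᴴ Gᴴ‖`.
-/

open scoped Matrix.Norms.L2Operator

lemma l2OpNorm_eq_l2_opNorm {n m : ℕ} (A : Matrix (Fin n) (Fin m) ℂ) : l2OpNorm A = ‖A‖ := rfl

namespace Matrix

variable {𝕜 : Type*} [RCLike 𝕜] {m n p : Type*} [Fintype m] [Fintype n] [Fintype p]
  [DecidableEq n]

-- Not `norm_one`: for empty `n` the norm is `0`; in general `‖1‖ = ‖1‖ * ‖1‖`.
lemma l2_opNorm_one_le : ‖(1 : Matrix n n 𝕜)‖ ≤ 1 := by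
  have h : ‖(1 : Matrix n n 𝕜)‖ = ‖(1 : Matrix n n 𝕜)‖ * ‖(1 : Matrix n n 𝕜)‖ := by
    simpa using l2_opNorm_conjTranspose_mul_self (1 : Matrix n n 𝕜)
  nlinarith [norm_nonneg (1 : Matrix n n 𝕜)]

lemma l2_opNorm_le_one_of_conjTranspose_mul_self_eq_one {V : Matrix m n 𝕜} (hV : Vᴴ * V = 1) :
    ‖V‖ ≤ 1 := by
  have h : ‖V‖ * ‖V‖ ≤ 1 := by
    rw [← l2_opNorm_conjTranspose_mul_self, hV]
    exact l2_opNorm_one_le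
  nlinarith [norm_nonneg V]

lemma l2_opNorm_mul_conjTranspose_mul_le [DecidableEq m] [DecidableEq p] {V : Matrix m n 𝕜}
    (hV : Vᴴ * V = 1) (X : Matrix m p 𝕜) :
    ‖V * (Vᴴ * X)‖ ≤ ‖X‖ := by
  have hV₁ : ‖V‖ ≤ 1 := l2_opNorm_le_one_of_conjTranspose_mul_self_eq_one hV
  calc ‖V * (Vᴴ * X)‖ ≤ ‖V‖ * (‖Vᴴ‖ * ‖X‖) :=
        (l2_opNorm_mul _ _).trans (by gcongr; exact l2_opNorm_mul _ _)
    _ ≤ 1 * (1 * ‖X‖) := by rw [l2_opNorm_conjTranspose]; gcongr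
    _ = ‖X‖ := by rw [one_mul, one_mul]

lemma l2_opNorm_add_sq_le_of_conjTranspose_mul_eq_zero {A B : Matrix m n 𝕜}
    (h : Aᴴ * B = 0) : ‖A + B‖ ^ 2 ≤ ‖A‖ ^ 2 + ‖B‖ ^ 2 := by
  have h' : Bᴴ * A = 0 := by
    rw [← conjTranspose_conjTranspose A, ← conjTranspose_mul, h, conjTranspose_zero]
  have hgram : (A + B)ᴴ * (A + B) = Aᴴ * A + Bᴴ * B := by
    simp only [conjTranspose_add, Matrix.add_mul, Matrix.mul_add, h, h', add_zero, zero_add]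
  calc ‖A + B‖ ^ 2 = ‖Aᴴ * A + Bᴴ * B‖ := by rw [← hgram, l2_opNorm_conjTranspose_mul_self, sq]
    _ ≤ ‖Aᴴ * A‖ + ‖Bᴴ * B‖ := norm_add_le _ _
    _ = ‖A‖ ^ 2 + ‖B‖ ^ 2 := by simp only [l2_opNorm_conjTranspose_mul_self, sq]

end Matrix

theorem two_sided_projection_error_general (n m k l : ℕ) (G : Matrix (Fin n) (Fin m) ℂ)
    (V : Matrix (Fin n) (Fin k) ℂ) (W : Matrix (Fin m) (Fin l) ℂ)
    (hV : Vᴴ * V = 1) :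
    l2OpNorm (G - V * Vᴴ * G * W * Wᴴ) ^ 2
      ≤ l2OpNorm (G - V * Vᴴ * G) ^ 2 + l2OpNorm (Gᴴ - W * Wᴴ * Gᴴ) ^ 2 := by
  simp only [l2OpNorm_eq_l2_opNorm]
  set X := G - G * W * Wᴴ
  have hsplit : G - V * Vᴴ * G * W * Wᴴ = (G - V * Vᴴ * G) + V * (Vᴴ * X) := by
    simp only [X, Matrix.mul_sub, Matrix.mul_assoc]
    abel
  have horth : (G - V * Vᴴ * G)ᴴ * (V * (Vᴴ * X)) = 0 := by
    simp only [conjTranspose_sub, conjTranspose_mul, conjTranspose_conjTranspose, Matrix.sub_mul,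
      Matrix.mul_assoc]
    rw [← Matrix.mul_assoc Vᴴ V, hV, Matrix.one_mul, sub_self]
  have hXadj : Xᴴ = Gᴴ - W * Wᴴ * Gᴴ := by
    simp only [X, conjTranspose_sub, conjTranspose_mul, conjTranspose_conjTranspose,
      Matrix.mul_assoc]
  calc ‖G - V * Vᴴ * G * W * Wᴴ‖ ^ 2 = ‖(G - V * Vᴴ * G) + V * (Vᴴ * X)‖ ^ 2 := by rw [hsplit]
    _ ≤ ‖G - V * Vᴴ * G‖ ^ 2 + ‖V * (Vᴴ * X)‖ ^ 2 :=
        l2_opNorm_add_sq_le_of_conjTranspose_mul_eq_zero horth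
    _ ≤ ‖G - V * Vᴴ * G‖ ^ 2 + ‖X‖ ^ 2 := by gcongr; exact l2_opNorm_mul_conjTranspose_mul_le hV X
    _ = ‖G - V * Vᴴ * G‖ ^ 2 + ‖Gᴴ - W * Wᴴ * Gᴴ‖ ^ 2 := by rw [← l2_opNorm_conjTranspose X, hXadj]

/-- The error of the two-sided projection `V Vᴴ G W Wᴴ` is controlled by the
row-basis error and the column-basis error (expressed via the adjoint matrix). -/
theorem two_sided_projection_error (n m k l : ℕ) (G : Matrix (Fin n) (Fin m) ℂ)
    (V : Matrix (Fin n) (Fin k) ℂ) (W : Matrix (Fin m) (Fin l) ℂ)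
    (hV : Vᴴ * V = 1) (hW : Wᴴ * W = 1) :
    l2OpNorm (G - V * Vᴴ * G * W * Wᴴ) ^ 2
      ≤ l2OpNorm (G - V * Vᴴ * G) ^ 2 + l2OpNorm (Gᴴ - W * Wᴴ * Gᴴ) ^ 2 :=
  two_sided_projection_error_general n m k l G V W hV
end

section
/- Let n, m, k, l be natural numbers, let G be an n×m complex matrix, let V be an n×k complex matrix with Vᴴ V = I, and let W be an m×l complex matrix with Wᴴ W = I. Then for every k×l complex matrix S one has ‖G − V (Vᴴ G W) Wᴴ‖_F ≤ ‖G − V S Wᴴ‖_F, i.e., the coupling matrix Ŝ := Vᴴ G W gives the best approximation of G of the form V S Wᴴ in the Frobenius norm. -/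
open Matrix

/-- The Frobenius norm of a complex matrix. -/
noncomputable def frobNorm {α β : Type*} [Fintype α] [Fintype β] (A : Matrix α β ℂ) : ℝ :=
  Real.sqrt (∑ i, ∑ j, ‖A i j‖ ^ 2)

/-!
With the trace inner product `⟪A, B⟫ = tr (Aᴴ B)`, whose norm is the Frobenius norm, the error
splits as `G - V S Wᴴ = (G - V Ŝ Wᴴ) + V (Ŝ - S) Wᴴ`. The two summands are orthogonal because
`tr ((G - V Ŝ Wᴴ)ᴴ V T Wᴴ) = tr ((Vᴴ (G - V Ŝ Wᴴ) W)ᴴ T)` for `T = Ŝ - S`, and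
`Vᴴ (G - V Ŝ Wᴴ) W = Ŝ - Ŝ = 0`; so Pythagoras gives the claim.
-/

section FrobeniusNorm

variable {α β : Type*} [Fintype α] [Fintype β]

theorem frobNorm_sq_eq_re_trace (A : Matrix α β ℂ) : frobNorm A ^ 2 = (trace (Aᴴ * A)).re := by
  rw [frobNorm, Real.sq_sqrt (by positivity), trace, Complex.re_sum, Finset.sum_comm]
  refine Finset.sum_congr rfl fun j _ => ?_
  simp only [diag_apply, mul_apply, conjTranspose_apply, Complex.re_sum, Complex.star_def,
    Complex.conj_mul', ← Complex.ofReal_pow, Complex.ofReal_re]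

theorem frobNorm_add_sq_of_trace_eq_zero {A B : Matrix α β ℂ} (h : trace (Aᴴ * B) = 0) :
    frobNorm (A + B) ^ 2 = frobNorm A ^ 2 + frobNorm B ^ 2 := by
  have h' : trace (Bᴴ * A) = 0 := by
    rw [← conjTranspose_conjTranspose A, ← conjTranspose_mul, trace_conjTranspose, h, star_zero]
  simp only [frobNorm_sq_eq_re_trace, conjTranspose_add, Matrix.add_mul, Matrix.mul_add,
    trace_add, h, h', Complex.add_re, Complex.zero_re]
  ring

theorem frobNorm_le_frobNorm_add_of_trace_eq_zero {A B : Matrix α β ℂ}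
    (h : trace (Aᴴ * B) = 0) : frobNorm A ≤ frobNorm (A + B) := by
  refine le_of_sq_le_sq ?_ (Real.sqrt_nonneg _)
  rw [frobNorm_add_sq_of_trace_eq_zero h]
  exact le_add_of_nonneg_right (sq_nonneg _)

end FrobeniusNorm

theorem trace_conjTranspose_mul_eq_zero {R m n p q : Type*} [CommRing R] [StarRing R]
    [Fintype m] [Fintype n] [Fintype p] [Fintype q]
    {X : Matrix m n R} {V : Matrix m p R} {W : Matrix n q R} (h : Vᴴ * X * W = 0)
    (T : Matrix p q R) : trace (Xᴴ * (V * T * Wᴴ)) = 0 := by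
  rw [← Matrix.mul_assoc, trace_mul_comm, ← Matrix.mul_assoc, ← Matrix.mul_assoc]
  have : Wᴴ * Xᴴ * V = (Vᴴ * X * W)ᴴ := by
    simp only [conjTranspose_mul, conjTranspose_conjTranspose, Matrix.mul_assoc]
  rw [this, h, conjTranspose_zero, Matrix.zero_mul, trace_zero]

theorem conjTranspose_mul_sub_mul_coupling_eq_zero {R m n p q : Type*} [Ring R] [StarRing R]
    [Fintype m] [Fintype n] [Fintype p] [Fintype q] [DecidableEq p] [DecidableEq q]
    {V : Matrix m p R} {W : Matrix n q R} (hV : Vᴴ * V = 1) (hW : Wᴴ * W = 1)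
    (G : Matrix m n R) : Vᴴ * (G - V * (Vᴴ * G * W) * Wᴴ) * W = 0 := by
  have : Vᴴ * (V * (Vᴴ * G * W) * Wᴴ) * W = Vᴴ * G * W := by
    simp only [← Matrix.mul_assoc, hV, Matrix.one_mul]
    simp only [Matrix.mul_assoc, hW, Matrix.mul_one]
  rw [Matrix.mul_sub, Matrix.sub_mul, this, sub_self]

/-- Best-approximation property of orthogonal directional cluster bases:
the coupling matrix `Ŝ := Vᴴ G W` gives the best approximation of `G` of the
form `V S Wᴴ` in the Frobenius norm. -/
theorem coupling_best_approximation (n m k l : ℕ) (G : Matrix (Fin n) (Fin m) ℂ)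
    (V : Matrix (Fin n) (Fin k) ℂ) (W : Matrix (Fin m) (Fin l) ℂ)
    (hV : Vᴴ * V = 1) (hW : Wᴴ * W = 1) (S : Matrix (Fin k) (Fin l) ℂ) :
    frobNorm (G - V * (Vᴴ * G * W) * Wᴴ) ≤ frobNorm (G - V * S * Wᴴ) := by
  have hsplit : G - V * S * Wᴴ
      = (G - V * (Vᴴ * G * W) * Wᴴ) + V * (Vᴴ * G * W - S) * Wᴴ := by
    rw [Matrix.mul_sub, Matrix.sub_mul]
    abel
  rw [hsplit]
  exact frobNorm_le_frobNorm_add_of_trace_eq_zero <| trace_conjTranspose_mul_eq_zero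
    (conjTranspose_mul_sub_mul_coupling_eq_zero hV hW G) _
end

section
/- Let n₁, n₂, m, k be natural numbers. Let G₁ be an n₁×m and G₂ an n₂×m complex matrix, let Q₁ (n₁×k) and Q₂ (n₂×k) be complex matrices with Q₁ᴴ Q₁ = I and Q₂ᴴ Q₂ = I, and let E₁, E₂ be k×k complex matrices. Define the stacked matrices G := fromRows G₁ G₂ (of size (n₁+n₂)×m), Q := fromRows (Q₁ E₁) (Q₂ E₂) (of size (n₁+n₂)×k), Ĝ := fromRows (Q₁ᴴ G₁) (Q₂ᴴ G₂) (of size 2k×m), and Q̂ := fromRows E₁ E₂ (of size 2k×k). Then ‖G − Q Qᴴ G‖_F² = ‖G₁ − Q₁ Q₁ᴴ G₁‖_F² + ‖G₂ − Q₂ Q₂ᴴ G₂‖_F² + ‖Ĝ − Q̂ Q̂ᴴ Ĝ‖_F². -/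
open Matrix

/-! Both projections have the same coefficient matrix: `Qᴴ G = Q̂ᴴ Ĝ = W` with
`W = E₁ᴴ Q₁ᴴ G₁ + E₂ᴴ Q₂ᴴ G₂`. Hence the `i`-th block row of `G - Q Qᴴ G` is
`Gᵢ - Qᵢ (Eᵢ W) = (Gᵢ - Qᵢ Qᵢᴴ Gᵢ) + Qᵢ (Qᵢᴴ Gᵢ - Eᵢ W)`, a sum of two
Frobenius-orthogonal terms, and since `Qᵢ` is an isometry the second has the norm of the
`i`-th block row of `Ĝ - Q̂ Q̂ᴴ Ĝ`. -/

variable {R l m n p : Type*}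

lemma fromRows_sub_fromRows_mul [Ring R] [Fintype l] (A : Matrix m p R) (B : Matrix n p R)
    (C : Matrix m l R) (D : Matrix n l R) (W : Matrix l p R) :
    fromRows A B - fromRows C D * W = fromRows (A - C * W) (B - D * W) := by
  rw [fromRows_mul]
  ext (i | i) j <;> rfl

lemma conjTranspose_fromRows_mul_fromRows [Semiring R] [Star R] [Fintype m] [Fintype n]
    (A : Matrix m l R) (B : Matrix n l R) (C : Matrix m p R) (D : Matrix n p R) :
    (fromRows A B)ᴴ * fromRows C D = Aᴴ * C + Bᴴ * D := by
  rw [conjTranspose_fromRows_eq_fromCols_conjTranspose, fromCols_mul_fromRows]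

lemma re_trace_conjTranspose_mul_self [Fintype m] [Fintype n] (A : Matrix m n ℂ) :
    (Aᴴ * A).trace.re = ∑ i, ∑ j, ‖A i j‖ ^ 2 := by
  simp only [trace, diag, mul_apply, conjTranspose_apply, Complex.re_sum]
  rw [Finset.sum_comm]
  refine Finset.sum_congr rfl fun i _ => Finset.sum_congr rfl fun j _ => ?_
  simp [← Complex.normSq_eq_norm_sq, Complex.normSq_apply]

lemma frobNorm_eq_sqrt_re_trace [Fintype m] [Fintype n] (A : Matrix m n ℂ) :
    frobNorm A = √(Aᴴ * A).trace.re := by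
  rw [frobNorm, re_trace_conjTranspose_mul_self]

lemma frobNorm_sq_eq_re_trace_s6 [Fintype m] [Fintype n] (A : Matrix m n ℂ) :
    frobNorm A ^ 2 = (Aᴴ * A).trace.re := by
  rw [re_trace_conjTranspose_mul_self, frobNorm]
  exact Real.sq_sqrt (by positivity)

lemma frobNorm_sq_fromRows [Fintype m] [Fintype n] [Fintype p]
    (A : Matrix m p ℂ) (B : Matrix n p ℂ) :
    frobNorm (fromRows A B) ^ 2 = frobNorm A ^ 2 + frobNorm B ^ 2 := by
  simp only [frobNorm_sq_eq_re_trace_s6, conjTranspose_fromRows_mul_fromRows, trace_add,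
    Complex.add_re]

lemma frobNorm_sq_add_of_conjTranspose_mul_eq_zero [Fintype m] [Fintype n]
    {A B : Matrix m n ℂ} (h : Aᴴ * B = 0) :
    frobNorm (A + B) ^ 2 = frobNorm A ^ 2 + frobNorm B ^ 2 := by
  have h' : Bᴴ * A = 0 := by simpa using congrArg conjTranspose h
  simp [frobNorm_sq_eq_re_trace_s6, Matrix.add_mul, Matrix.mul_add, h, h']

lemma frobNorm_mul_of_conjTranspose_mul_self_eq_one [Fintype m] [Fintype n] [Fintype p]
    [DecidableEq n] {Q : Matrix m n ℂ} (hQ : Qᴴ * Q = 1) (B : Matrix n p ℂ) :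
    frobNorm (Q * B) = frobNorm B := by
  rw [frobNorm_eq_sqrt_re_trace, frobNorm_eq_sqrt_re_trace, conjTranspose_mul,
    Matrix.mul_assoc, ← Matrix.mul_assoc Qᴴ, hQ, Matrix.one_mul]

lemma conjTranspose_mul_sub_mul_conjTranspose_mul_eq_zero [Ring R] [Star R] [Fintype m]
    [Fintype n] [DecidableEq n] {Q : Matrix m n R} (hQ : Qᴴ * Q = 1) (G : Matrix m p R) :
    Qᴴ * (G - Q * Qᴴ * G) = 0 := by
  rw [Matrix.mul_sub, ← Matrix.mul_assoc, ← Matrix.mul_assoc, hQ, Matrix.one_mul, sub_self]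

lemma frobNorm_sq_sub_mul_of_conjTranspose_mul_self_eq_one [Fintype m] [Fintype n] [Fintype p]
    [DecidableEq n] {Q : Matrix m n ℂ} (hQ : Qᴴ * Q = 1) (G : Matrix m p ℂ)
    (X : Matrix n p ℂ) :
    frobNorm (G - Q * X) ^ 2 = frobNorm (G - Q * Qᴴ * G) ^ 2 + frobNorm (Qᴴ * G - X) ^ 2 := by
  have hsplit : G - Q * X = (G - Q * Qᴴ * G) + Q * (Qᴴ * G - X) := by
    rw [Matrix.mul_sub, Matrix.mul_assoc]
    abel
  have horth : (G - Q * Qᴴ * G)ᴴ * (Q * (Qᴴ * G - X)) = 0 := by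
    rw [← Matrix.mul_assoc, ← conjTranspose_conjTranspose (_ᴴ * Q), conjTranspose_mul,
      conjTranspose_conjTranspose, conjTranspose_mul_sub_mul_conjTranspose_mul_eq_zero hQ,
      conjTranspose_zero, Matrix.zero_mul]
  rw [hsplit, frobNorm_sq_add_of_conjTranspose_mul_eq_zero horth,
    frobNorm_mul_of_conjTranspose_mul_self_eq_one hQ]

/-- Identity (eq:error_nonleaf): exact Pythagoras decomposition of the
approximation error of a nested directional cluster basis for a cluster with
two sons into the sons' errors plus the error of the condensed matrix `Ghat`. -/
theorem nested_basis_error_decomposition (n₁ n₂ m k : ℕ)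
    (G₁ : Matrix (Fin n₁) (Fin m) ℂ) (G₂ : Matrix (Fin n₂) (Fin m) ℂ)
    (Q₁ : Matrix (Fin n₁) (Fin k) ℂ) (Q₂ : Matrix (Fin n₂) (Fin k) ℂ)
    (E₁ E₂ : Matrix (Fin k) (Fin k) ℂ)
    (hQ₁ : Q₁ᴴ * Q₁ = 1) (hQ₂ : Q₂ᴴ * Q₂ = 1) :
    let G := Matrix.fromRows G₁ G₂
    let Q := Matrix.fromRows (Q₁ * E₁) (Q₂ * E₂)
    let Ghat := Matrix.fromRows (Q₁ᴴ * G₁) (Q₂ᴴ * G₂)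
    let Qhat := Matrix.fromRows E₁ E₂
    frobNorm (G - Q * Qᴴ * G) ^ 2
      = frobNorm (G₁ - Q₁ * Q₁ᴴ * G₁) ^ 2 + frobNorm (G₂ - Q₂ * Q₂ᴴ * G₂) ^ 2
        + frobNorm (Ghat - Qhat * Qhatᴴ * Ghat) ^ 2 := by
  intro G Q Ghat Qhat
  set W := E₁ᴴ * (Q₁ᴴ * G₁) + E₂ᴴ * (Q₂ᴴ * G₂)
  have hQG : Qᴴ * G = W := by
    simp only [Q, G, W, conjTranspose_fromRows_mul_fromRows, conjTranspose_mul, Matrix.mul_assoc]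
  have hQhatGhat : Qhatᴴ * Ghat = W := conjTranspose_fromRows_mul_fromRows _ _ _ _
  rw [Matrix.mul_assoc, hQG, Matrix.mul_assoc Qhat, hQhatGhat, fromRows_sub_fromRows_mul,
    fromRows_sub_fromRows_mul, frobNorm_sq_fromRows, frobNorm_sq_fromRows, Matrix.mul_assoc Q₁,
    Matrix.mul_assoc Q₂, frobNorm_sq_sub_mul_of_conjTranspose_mul_self_eq_one hQ₁,
    frobNorm_sq_sub_mul_of_conjTranspose_mul_self_eq_one hQ₂]
  ring
end

section
/- Let μ be a measure on ℝ³, let Ω ⊆ ℝ³ be a measurable set, let T be a finite set, let (B_t)_{t∈T} be a family of measurable subsets of ℝ³, and let d > 0, C_bb > 0 be real numbers and C_ov a natural number. Assume (i) d² ≤ C_bb · μ(B_t ∩ Ω) for every t ∈ T, and (ii) for every x ∈ Ω, the number of t ∈ T with x ∈ B_t is at most C_ov. Then (#T) · d² ≤ C_bb · C_ov · μ(Ω). -/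
open MeasureTheory

/-- Counting argument of Lemma 5.2 (Clusters): under the curvature condition
`d² ≤ C_bb · μ(B_t ∩ Ω)` and the bounded-overlap condition, the number of
clusters on one level is bounded by `C_bb C_ov μ(Ω) / d²`. -/
theorem cluster_counting {ι : Type*} (μ : Measure (EuclideanSpace ℝ (Fin 3)))
    (Ω : Set (EuclideanSpace ℝ (Fin 3))) (hΩ : MeasurableSet Ω)
    (T : Finset ι) (B : ι → Set (EuclideanSpace ℝ (Fin 3)))
    (hBmeas : ∀ t ∈ T, MeasurableSet (B t))
    (d C_bb : ℝ) (hd : 0 < d) (hCbb : 0 < C_bb) (C_ov : ℕ)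
    (hcurv : ∀ t ∈ T, ENNReal.ofReal (d ^ 2) ≤ ENNReal.ofReal C_bb * μ (B t ∩ Ω))
    (hov : ∀ x ∈ Ω, ({t | t ∈ T ∧ x ∈ B t}).ncard ≤ C_ov) :
    (T.card : ENNReal) * ENNReal.ofReal (d ^ 2)
      ≤ ENNReal.ofReal C_bb * (C_ov : ENNReal) * μ Ω := by
  classical
  have hsum : ∑ t ∈ T, μ (B t ∩ Ω) ≤ (C_ov : ENNReal) * μ Ω := by
    have h1 : ∀ t ∈ T, μ (B t ∩ Ω)
        = ∫⁻ x, (B t ∩ Ω).indicator (fun _ => (1 : ENNReal)) x ∂μ := by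
      intro t ht
      rw [lintegral_indicator ((hBmeas t ht).inter hΩ)]
      simp
    rw [Finset.sum_congr rfl h1, ← lintegral_finset_sum]
    · calc ∫⁻ x, ∑ t ∈ T, (B t ∩ Ω).indicator (fun _ => (1 : ENNReal)) x ∂μ
          ≤ ∫⁻ x, Ω.indicator (fun _ => (C_ov : ENNReal)) x ∂μ := by
            refine lintegral_mono fun x => ?_
            by_cases hx : x ∈ Ω
            · have hfilter : ∀ t ∈ T, (B t ∩ Ω).indicator (fun _ => (1 : ENNReal)) x
                  = if x ∈ B t then 1 else 0 := by
                intro t ht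
                by_cases hb : x ∈ B t
                · simp [Set.indicator_of_mem (Set.mem_inter hb hx), hb]
                · simp [Set.indicator_of_notMem (fun (h : x ∈ B t ∩ Ω) => hb h.1), hb]
              rw [Finset.sum_congr rfl hfilter, Set.indicator_of_mem hx]
              rw [← Finset.sum_filter]
              simp only [Finset.sum_const, nsmul_eq_mul, mul_one]
              have hcard : ({t | t ∈ T ∧ x ∈ B t}).ncard
                  = (T.filter (fun t => x ∈ B t)).card := by
                congr 1
                rw [← Set.ncard_coe_finset]
                congr 1
                ext t
                simp [Finset.mem_filter]
              have := hov x hx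
              rw [hcard] at this
              exact_mod_cast Nat.cast_le.mpr this
            · simp only [Set.indicator_of_notMem hx]
              refine le_of_eq (Finset.sum_eq_zero fun t _ => ?_)
              exact Set.indicator_of_notMem (fun (h : x ∈ B t ∩ Ω) => hx h.2) _
        _ = (C_ov : ENNReal) * μ Ω := by
            rw [lintegral_indicator hΩ]; simp [mul_comm]
    · intro t ht
      exact (measurable_const.indicator ((hBmeas t ht).inter hΩ))
  calc (T.card : ENNReal) * ENNReal.ofReal (d ^ 2)
      = ∑ _t ∈ T, ENNReal.ofReal (d ^ 2) := by simp [mul_comm]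
    _ ≤ ∑ t ∈ T, ENNReal.ofReal C_bb * μ (B t ∩ Ω) := Finset.sum_le_sum hcurv
    _ = ENNReal.ofReal C_bb * ∑ t ∈ T, μ (B t ∩ Ω) := by rw [Finset.mul_sum]
    _ ≤ ENNReal.ofReal C_bb * ((C_ov : ENNReal) * μ Ω) :=
        mul_le_mul_right hsum _
    _ = ENNReal.ofReal C_bb * (C_ov : ENNReal) * μ Ω := by ring
end

section
/- Let μ be a measure on ℝ³, let Ω ⊆ ℝ³ be a measurable set, let T be a finite set, let (B_t)_{t∈T} be a family of measurable subsets of ℝ³, let m ∈ ℝ³, and let d > 0, R > 0, C_bb > 0, C_bp > 0 be real numbers and C_ov a natural number. Assume (i) d² ≤ C_bb · μ(B_t ∩ Ω) for every t ∈ T, (ii) for every x ∈ Ω, the number of t ∈ T with x ∈ B_t is at most C_ov, (iii) B_t ⊆ closedBall(m, R) for every t ∈ T, and (iv) μ(closedBall(x, r) ∩ Ω) ≤ C_bp · r² for all x ∈ ℝ³ and r ≥ 0. Then (#T) · d² ≤ C_bb · C_ov · C_bp · R². -/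
open MeasureTheory

/-! Since every point of `Ω` lies in at most `C_ov` of the sets `B t`, integrating the indicators
gives `∑ t, μ (B t ∩ Ω) ≤ C_ov · μ (closedBall m R ∩ Ω) ≤ C_ov C_bp R²`, while each summand is at
least `d² / C_bb`. -/

theorem sum_measure_le_mul_measure_of_multiplicity_le {α ι : Type*} [MeasurableSpace α]
    (μ : Measure α) {T : Finset ι} {A : ι → Set α} {S : Set α} {N : ℕ}
    (hA : ∀ t ∈ T, MeasurableSet (A t)) (hAS : ∀ t ∈ T, A t ⊆ S)
    (hN : ∀ x ∈ S, {t | t ∈ T ∧ x ∈ A t}.ncard ≤ N) :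
    ∑ t ∈ T, μ (A t) ≤ N * μ S := by
  classical
  have hpointwise (x : α) :
      ∑ t ∈ T, (A t).indicator 1 x ≤ S.indicator (fun _ ↦ (N : ENNReal)) x := by
    simp only [Set.indicator_apply, Pi.one_apply, Finset.sum_boole]
    split_ifs with hx
    · simpa [← Finset.coe_filter, Set.ncard_coe_finset] using hN x hx
    · rw [Finset.filter_false_of_mem fun t ht hxt ↦ hx (hAS t ht hxt)]
      simp
  calc ∑ t ∈ T, μ (A t)
      = ∫⁻ x, ∑ t ∈ T, (A t).indicator 1 x ∂μ := by
        rw [lintegral_finsetSum _ fun t ht ↦ measurable_one.indicator (hA t ht)]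
        exact Finset.sum_congr rfl fun t ht ↦ (lintegral_indicator_one (hA t ht)).symm
    _ ≤ ∫⁻ x, S.indicator (fun _ ↦ (N : ENNReal)) x ∂μ := lintegral_mono hpointwise
    _ ≤ N * μ S := lintegral_indicator_const_le S N

theorem boxes_in_ball_counting_general {ι : Type*} (μ : Measure (EuclideanSpace ℝ (Fin 3)))
    (Ω : Set (EuclideanSpace ℝ (Fin 3))) (hΩ : MeasurableSet Ω)
    (T : Finset ι) (B : ι → Set (EuclideanSpace ℝ (Fin 3)))
    (hBmeas : ∀ t ∈ T, MeasurableSet (B t))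
    (m : EuclideanSpace ℝ (Fin 3))
    (d R C_bb C_bp : ℝ) (hR : 0 < R) (hCbb : 0 < C_bb) (hCbp : 0 < C_bp)
    (C_ov : ℕ)
    (hcurv : ∀ t ∈ T, ENNReal.ofReal (d ^ 2) ≤ ENNReal.ofReal C_bb * μ (B t ∩ Ω))
    (hov : ∀ x ∈ Ω, ({t | t ∈ T ∧ x ∈ B t}).ncard ≤ C_ov)
    (hsub : ∀ t ∈ T, B t ⊆ Metric.closedBall m R)
    (hball : ∀ (x : EuclideanSpace ℝ (Fin 3)) (r : ℝ), 0 ≤ r →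
      μ (Metric.closedBall x r ∩ Ω) ≤ ENNReal.ofReal (C_bp * r ^ 2)) :
    (T.card : ℝ) * d ^ 2 ≤ C_bb * C_ov * C_bp * R ^ 2 := by
  have hmult (x) (hx : x ∈ Metric.closedBall m R ∩ Ω) :
      {t | t ∈ T ∧ x ∈ B t ∩ Ω}.ncard ≤ C_ov :=
    le_trans (Set.ncard_le_ncard (fun _ ↦ And.imp_right And.left)
      (T.finite_toSet.subset fun _ ht ↦ ht.1)) (hov x hx.2)
  have hsum : ∑ t ∈ T, μ (B t ∩ Ω) ≤ C_ov * ENNReal.ofReal (C_bp * R ^ 2) :=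
    (sum_measure_le_mul_measure_of_multiplicity_le μ (fun t ht ↦ (hBmeas t ht).inter hΩ)
      (fun t ht ↦ Set.inter_subset_inter_left Ω (hsub t ht)) hmult).trans
      (by gcongr; exact hball m R hR.le)
  refine (ENNReal.ofReal_le_ofReal_iff (by positivity)).1 ?_
  calc ENNReal.ofReal (T.card * d ^ 2)
      = ∑ t ∈ T, ENNReal.ofReal (d ^ 2) := by
        rw [Finset.sum_const, nsmul_eq_mul, ENNReal.ofReal_mul (by positivity),
          ENNReal.ofReal_natCast]
    _ ≤ ∑ t ∈ T, ENNReal.ofReal C_bb * μ (B t ∩ Ω) := Finset.sum_le_sum hcurv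
    _ ≤ ENNReal.ofReal C_bb * (C_ov * ENNReal.ofReal (C_bp * R ^ 2)) := by
        rw [← Finset.mul_sum]; gcongr
    _ = ENNReal.ofReal (C_bb * C_ov * C_bp * R ^ 2) := by
        rw [← ENNReal.ofReal_natCast, ← ENNReal.ofReal_mul (by positivity),
          ← ENNReal.ofReal_mul hCbb.le, mul_assoc C_bb, mul_assoc C_bb, mul_assoc (C_ov : ℝ)]

/-- Measure-theoretic counting step in the proof of Lemma 5.1 (Sparsity): the
number of equally-sized boxes satisfying the curvature and overlap conditions
that fit inside a ball of radius `R` is at most `C_bb C_ov C_bp R² / d²`. -/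
theorem boxes_in_ball_counting {ι : Type*} (μ : Measure (EuclideanSpace ℝ (Fin 3)))
    (Ω : Set (EuclideanSpace ℝ (Fin 3))) (hΩ : MeasurableSet Ω)
    (T : Finset ι) (B : ι → Set (EuclideanSpace ℝ (Fin 3)))
    (hBmeas : ∀ t ∈ T, MeasurableSet (B t))
    (m : EuclideanSpace ℝ (Fin 3))
    (d R C_bb C_bp : ℝ) (hd : 0 < d) (hR : 0 < R) (hCbb : 0 < C_bb) (hCbp : 0 < C_bp)
    (C_ov : ℕ)
    (hcurv : ∀ t ∈ T, ENNReal.ofReal (d ^ 2) ≤ ENNReal.ofReal C_bb * μ (B t ∩ Ω))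
    (hov : ∀ x ∈ Ω, ({t | t ∈ T ∧ x ∈ B t}).ncard ≤ C_ov)
    (hsub : ∀ t ∈ T, B t ⊆ Metric.closedBall m R)
    (hball : ∀ (x : EuclideanSpace ℝ (Fin 3)) (r : ℝ), 0 ≤ r →
      μ (Metric.closedBall x r ∩ Ω) ≤ ENNReal.ofReal (C_bp * r ^ 2)) :
    (T.card : ℝ) * d ^ 2 ≤ C_bb * C_ov * C_bp * R ^ 2 :=
  boxes_in_ball_counting_general μ Ω hΩ T B hBmeas m d R C_bb C_bp hR hCbb hCbp C_ov hcurv hov hsub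
    hball
end

section
/- Let μ be a measure on ℝ³, let Ω ⊆ ℝ³ be a measurable set, let C be a finite set, let A ⊆ ℝ³ be nonempty and let (B_s)_{s∈C} be nonempty measurable subsets of ℝ³, let m ∈ ℝ³, and let d > 0, η₂ > 0, C_bb > 0, C_bp > 0 be real numbers and C_ov a natural number. Assume (i) dist(x, m) ≤ d/2 for all x ∈ A, (ii) for every s ∈ C: the diameter of B_s is at most d, d² ≤ C_bb · μ(B_s ∩ Ω), and there exist x ∈ A, y ∈ B_s with ‖x − y‖ < d/η₂, (iii) for every x ∈ Ω, the number of s ∈ C with x ∈ B_s is at most C_ov, and (iv) μ(closedBall(x, r) ∩ Ω) ≤ C_bp · r² for all x ∈ ℝ³ and r ≥ 0. Then #C ≤ C_bb · C_ov · C_bp · (3/2 + 1/η₂)². -/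
open MeasureTheory

/-- Low-frequency conclusion of Lemma 5.1 (Sparsity): the set `C` of clusters
whose bounding boxes (common diameter `d`) violate the standard admissibility
condition with respect to a box `A` with midpoint `m` and diameter `d` has
cardinality at most `C_bb C_ov C_bp (3/2 + 1/η₂)²`. -/
theorem sparsity_lowfreq {ι : Type*} (μ : Measure (EuclideanSpace ℝ (Fin 3)))
    (Ω : Set (EuclideanSpace ℝ (Fin 3))) (hΩ : MeasurableSet Ω)
    (C : Finset ι) (A : Set (EuclideanSpace ℝ (Fin 3))) (hA : A.Nonempty)
    (B : ι → Set (EuclideanSpace ℝ (Fin 3)))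
    (hBne : ∀ s ∈ C, (B s).Nonempty) (hBmeas : ∀ s ∈ C, MeasurableSet (B s))
    (m : EuclideanSpace ℝ (Fin 3))
    (d η₂ C_bb C_bp : ℝ) (hd : 0 < d) (hη : 0 < η₂) (hCbb : 0 < C_bb) (hCbp : 0 < C_bp)
    (C_ov : ℕ)
    (hmid : ∀ x ∈ A, dist x m ≤ d / 2)
    (hdiam : ∀ s ∈ C, ∀ z ∈ B s, ∀ z' ∈ B s, dist z z' ≤ d)
    (hcurv : ∀ s ∈ C, ENNReal.ofReal (d ^ 2) ≤ ENNReal.ofReal C_bb * μ (B s ∩ Ω))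
    (hnear : ∀ s ∈ C, ∃ x ∈ A, ∃ y ∈ B s, ‖x - y‖ < d / η₂)
    (hov : ∀ x ∈ Ω, ({s | s ∈ C ∧ x ∈ B s}).ncard ≤ C_ov)
    (hball : ∀ (x : EuclideanSpace ℝ (Fin 3)) (r : ℝ), 0 ≤ r →
      μ (Metric.closedBall x r ∩ Ω) ≤ ENNReal.ofReal (C_bp * r ^ 2)) :
    (C.card : ℝ) ≤ C_bb * C_ov * C_bp * (3 / 2 + 1 / η₂) ^ 2 := by
  classical
  set R := d * (3 / 2 + 1 / η₂) with hR
  have hRpos : 0 < R := by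
    have : 0 < 3 / 2 + 1 / η₂ := by positivity
    positivity
  set K := Metric.closedBall m R ∩ Ω with hK
  have hKmeas : MeasurableSet K := (measurableSet_closedBall).inter hΩ
  have hmeasE : ∀ s ∈ C, MeasurableSet (B s ∩ Ω) := fun s hs => (hBmeas s hs).inter hΩ
  have hsub : ∀ s ∈ C, B s ∩ Ω ⊆ K := by
    intro s hs z hz
    obtain ⟨x, hx, y, hy, hxy⟩ := hnear s hs
    refine ⟨?_, hz.2⟩
    have h1 : dist z m ≤ dist z y + dist y x + dist x m := dist_triangle4 z y x m
    have h2 : dist z y ≤ d := hdiam s hs z hz.1 y hy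
    have h3 : dist y x ≤ d / η₂ := by
      rw [dist_comm, dist_eq_norm]; exact le_of_lt hxy
    have h4 := hmid x hx
    have hreq : d + d / η₂ + d / 2 = R := by
      rw [hR]; field_simp; ring
    simp only [Metric.mem_closedBall]
    linarith
  -- overlap bound
  have key : ∑ s ∈ C, μ (B s ∩ Ω) ≤ (C_ov : ENNReal) * μ K := by
    have h1 : ∑ s ∈ C, μ (B s ∩ Ω)
        = ∫⁻ x, ∑ s ∈ C, (B s ∩ Ω).indicator 1 x ∂μ := by
      rw [lintegral_finset_sum _ (fun s hs => measurable_one.indicator (hmeasE s hs))]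
      refine Finset.sum_congr rfl fun s hs => ?_
      rw [lintegral_indicator (hmeasE s hs)]
      simp
    have h2 : ∫⁻ x, K.indicator (fun _ => (C_ov : ENNReal)) x ∂μ
        = (C_ov : ENNReal) * μ K := lintegral_indicator_const hKmeas _
    rw [h1, ← h2]
    refine lintegral_mono fun x => ?_
    by_cases hxK : x ∈ K
    · have hxΩ : x ∈ Ω := hxK.2
      have hsum : ∑ s ∈ C, (B s ∩ Ω).indicator (1 : EuclideanSpace ℝ (Fin 3) → ENNReal) x
          = ((C.filter fun s => x ∈ B s ∩ Ω).card : ENNReal) := by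
        simp [Set.indicator_apply, Finset.sum_boole]
      have hfeq : (C.filter fun s => x ∈ B s ∩ Ω) = C.filter fun s => x ∈ B s := by
        refine Finset.filter_congr fun s hs => ?_
        simp [hxΩ]
      have hcard : (C.filter fun s => x ∈ B s).card ≤ C_ov := by
        have := hov x hxΩ
        have hset : ({s | s ∈ C ∧ x ∈ B s} : Set ι)
            = ↑(C.filter fun s => x ∈ B s) := by
          ext s; simp
        rw [hset, Set.ncard_coe_finset] at this
        exact this
      rw [hsum, hfeq]
      simp only [Set.indicator_of_mem hxK]
      exact_mod_cast Nat.cast_le.mpr hcard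
    · have : ∀ s ∈ C, (B s ∩ Ω).indicator (1 : EuclideanSpace ℝ (Fin 3) → ENNReal) x = 0 := by
        intro s hs
        apply Set.indicator_of_notMem
        exact fun hmem => hxK (hsub s hs hmem)
      rw [Finset.sum_congr rfl this]
      simp
  -- curvature bound
  have hsumlow : (C.card : ENNReal) * ENNReal.ofReal (d ^ 2)
      ≤ ENNReal.ofReal C_bb * ∑ s ∈ C, μ (B s ∩ Ω) := by
    rw [Finset.mul_sum]
    calc (C.card : ENNReal) * ENNReal.ofReal (d ^ 2)
        = ∑ _s ∈ C, ENNReal.ofReal (d ^ 2) := by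
          rw [Finset.sum_const, nsmul_eq_mul]
      _ ≤ ∑ s ∈ C, ENNReal.ofReal C_bb * μ (B s ∩ Ω) := Finset.sum_le_sum hcurv
  have hKbound : μ K ≤ ENNReal.ofReal (C_bp * R ^ 2) := hball m R hRpos.le
  have hfinal : (C.card : ENNReal) * ENNReal.ofReal (d ^ 2)
      ≤ ENNReal.ofReal C_bb * ((C_ov : ENNReal) * ENNReal.ofReal (C_bp * R ^ 2)) := by
    refine hsumlow.trans ?_
    exact mul_le_mul_right (key.trans (mul_le_mul_right hKbound _)) _
  -- convert to reals
  have hreal : (C.card : ℝ) * d ^ 2 ≤ C_bb * ((C_ov : ℝ) * (C_bp * R ^ 2)) := by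
    have hL : (C.card : ENNReal) * ENNReal.ofReal (d ^ 2)
        = ENNReal.ofReal ((C.card : ℝ) * d ^ 2) := by
      rw [ENNReal.ofReal_mul (by positivity)]
      simp
    have hRhs : ENNReal.ofReal C_bb * ((C_ov : ENNReal) * ENNReal.ofReal (C_bp * R ^ 2))
        = ENNReal.ofReal (C_bb * ((C_ov : ℝ) * (C_bp * R ^ 2))) := by
      rw [ENNReal.ofReal_mul hCbb.le,
        ENNReal.ofReal_mul (show (0:ℝ) ≤ (C_ov:ℝ) from Nat.cast_nonneg _),
        ENNReal.ofReal_natCast]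
    rw [hL, hRhs] at hfinal
    exact (ENNReal.ofReal_le_ofReal_iff (by positivity)).mp hfinal
  have hd2 : (0 : ℝ) < d ^ 2 := by positivity
  have heq : C_bb * ((C_ov : ℝ) * (C_bp * R ^ 2))
      = C_bb * C_ov * C_bp * (3 / 2 + 1 / η₂) ^ 2 * d ^ 2 := by
    rw [hR]; ring
  rw [heq] at hreal
  exact le_of_mul_le_mul_right hreal hd2
end

section
/- Let μ be a measure on ℝ³, let Ω ⊆ ℝ³ be a measurable set, let C be a finite set, let A ⊆ ℝ³ be nonempty and let (B_s)_{s∈C} be nonempty measurable subsets of ℝ³, let m ∈ ℝ³, and let d > 0, η₂ > 0, κ > 0, C_bb > 0, C_bp > 0 be real numbers with κ · d > 1, and C_ov a natural number. Assume (i) dist(x, m) ≤ d/2 for all x ∈ A, (ii) for every s ∈ C: the diameter of B_s is at most d, d² ≤ C_bb · μ(B_s ∩ Ω), and there exist x ∈ A, y ∈ B_s with ‖x − y‖ < κ · d² / η₂, (iii) for every x ∈ Ω, the number of s ∈ C with x ∈ B_s is at most C_ov, and (iv) μ(closedBall(x, r) ∩ Ω) ≤ C_bp · r² for all x ∈ ℝ³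 and r ≥ 0. Then #C ≤ C_bb · C_ov · C_bp · (3/2 + 1/η₂)² · κ² · d². -/
open MeasureTheory Finset
open scoped ENNReal

/-!
Every `B s` meets the `κ d² / η₂`-neighbourhood of `A ⊆ closedBall m (d / 2)` and has diameter
at most `d`, so it lies in `closedBall m R` with `R = (3/2) d + κ d² / η₂ ≤ (3/2 + 1/η₂) κ d²`
(using `κ d > 1`). Summing the lower bounds `d² ≤ C_bb μ(B s ∩ Ω)` and integrating the overlap
bound gives `#C d² ≤ C_bb C_ov μ(closedBall m R ∩ Ω) ≤ C_bb C_ov C_bp R²`; divide by `d²`.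
-/

theorem Finset.sum_indicator_one_eq_ncard {α ι : Type*} (C : Finset ι) (E : ι → Set α) (x : α) :
    ∑ s ∈ C, (E s).indicator (1 : α → ℝ≥0∞) x = {s | s ∈ C ∧ x ∈ E s}.ncard := by
  classical
  rw [← Finset.coe_filter, Set.ncard_coe_finset, Finset.card_filter]
  simp [Set.indicator_apply]

theorem MeasureTheory.sum_measure_le_mul_measure_biUnion {α ι : Type*} [MeasurableSpace α]
    (μ : Measure α) {C : Finset ι} {E : ι → Set α} (hE : ∀ s ∈ C, MeasurableSet (E s)) {N : ℕ}
    (hN : ∀ x ∈ ⋃ s ∈ C, E s, {s | s ∈ C ∧ x ∈ E s}.ncard ≤ N) :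
    ∑ s ∈ C, μ (E s) ≤ N * μ (⋃ s ∈ C, E s) := by
  set U := ⋃ s ∈ C, E s
  have hU : MeasurableSet U := C.measurableSet_biUnion hE
  have hpt : ∀ x, ∑ s ∈ C, (E s).indicator 1 x ≤ (N : ℝ≥0∞) * U.indicator 1 x := by
    intro x
    rw [Finset.sum_indicator_one_eq_ncard]
    by_cases hx : x ∈ U
    · simpa [hx] using hN x hx
    · have : {s | s ∈ C ∧ x ∈ E s} = ∅ :=
        Set.eq_empty_of_forall_notMem fun s hs => hx (Set.mem_biUnion hs.1 hs.2)
      simp [hx, this]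
  calc ∑ s ∈ C, μ (E s) = ∫⁻ x, ∑ s ∈ C, (E s).indicator 1 x ∂μ := by
        rw [lintegral_finsetSum' _ fun s hs => (measurable_one.indicator (hE s hs)).aemeasurable]
        exact sum_congr rfl fun s hs => (lintegral_indicator_one (hE s hs)).symm
    _ ≤ ∫⁻ x, N * U.indicator 1 x ∂μ := lintegral_mono hpt
    _ = N * μ U := by
        rw [lintegral_const_mul _ (measurable_one.indicator hU), lintegral_indicator_one hU]

theorem MeasureTheory.card_mul_le_mul_measure_biUnion {α ι : Type*} [MeasurableSpace α]
    (μ : Measure α) {C : Finset ι} {E : ι → Set α} (hE : ∀ s ∈ C, MeasurableSet (E s)) {N : ℕ}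
    (hN : ∀ x ∈ ⋃ s ∈ C, E s, {s | s ∈ C ∧ x ∈ E s}.ncard ≤ N) {c K : ℝ≥0∞}
    (hc : ∀ s ∈ C, c ≤ K * μ (E s)) :
    #C * c ≤ K * (N * μ (⋃ s ∈ C, E s)) :=
  calc #C * c = ∑ _s ∈ C, c := by rw [sum_const, nsmul_eq_mul]
    _ ≤ ∑ s ∈ C, K * μ (E s) := sum_le_sum hc
    _ = K * ∑ s ∈ C, μ (E s) := (mul_sum _ _ _).symm
    _ ≤ K * (N * μ (⋃ s ∈ C, E s)) := by gcongr; exact sum_measure_le_mul_measure_biUnion μ hE hN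

theorem MeasureTheory.card_mul_le_mul_of_ofReal_le {α ι : Type*} [MeasurableSpace α]
    (μ : Measure α) {C : Finset ι} {E : ι → Set α} (hE : ∀ s ∈ C, MeasurableSet (E s)) {N : ℕ}
    (hN : ∀ x ∈ ⋃ s ∈ C, E s, {s | s ∈ C ∧ x ∈ E s}.ncard ≤ N) {c K M : ℝ} (hK : 0 ≤ K)
    (hM : 0 ≤ M) (hc : ∀ s ∈ C, ENNReal.ofReal c ≤ ENNReal.ofReal K * μ (E s))
    (hU : μ (⋃ s ∈ C, E s) ≤ ENNReal.ofReal M) :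
    #C * c ≤ K * (N * M) := by
  have h : #C * ENNReal.ofReal c ≤ ENNReal.ofReal K * (N * ENNReal.ofReal M) :=
    (card_mul_le_mul_measure_biUnion μ hE hN hc).trans (by gcongr)
  rw [← ENNReal.ofReal_le_ofReal_iff (by positivity), ENNReal.ofReal_mul (by positivity),
    ENNReal.ofReal_mul hK, ENNReal.ofReal_mul (by positivity)]
  simpa using h

theorem Metric.subset_closedBall_of_dist_le {X : Type*} [PseudoMetricSpace X] {E : Set X}
    {m x y : X} {a b d : ℝ} (hx : dist x m ≤ a) (hxy : dist y x ≤ b) (hy : y ∈ E)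
    (hE : ∀ z ∈ E, ∀ z' ∈ E, dist z z' ≤ d) : E ⊆ closedBall m (d + b + a) := fun z hz =>
  (dist_triangle4 z y x m).trans (by gcongr; exact hE z hz y hy)

theorem sparsity_highfreq_general {ι : Type*} (μ : Measure (EuclideanSpace ℝ (Fin 3)))
    (Ω : Set (EuclideanSpace ℝ (Fin 3))) (hΩ : MeasurableSet Ω)
    (C : Finset ι) (A : Set (EuclideanSpace ℝ (Fin 3)))
    (B : ι → Set (EuclideanSpace ℝ (Fin 3)))
    (hBmeas : ∀ s ∈ C, MeasurableSet (B s))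
    (m : EuclideanSpace ℝ (Fin 3))
    (d η₂ κ C_bb C_bp : ℝ) (hd : 0 < d) (hη : 0 < η₂) (hκ : 0 < κ) (hκd : 1 < κ * d)
    (hCbb : 0 < C_bb) (hCbp : 0 < C_bp) (C_ov : ℕ)
    (hmid : ∀ x ∈ A, dist x m ≤ d / 2)
    (hdiam : ∀ s ∈ C, ∀ z ∈ B s, ∀ z' ∈ B s, dist z z' ≤ d)
    (hcurv : ∀ s ∈ C, ENNReal.ofReal (d ^ 2) ≤ ENNReal.ofReal C_bb * μ (B s ∩ Ω))
    (hnear : ∀ s ∈ C, ∃ x ∈ A, ∃ y ∈ B s, ‖x - y‖ < κ * d ^ 2 / η₂)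
    (hov : ∀ x ∈ Ω, ({s | s ∈ C ∧ x ∈ B s}).ncard ≤ C_ov)
    (hball : ∀ (x : EuclideanSpace ℝ (Fin 3)) (r : ℝ), 0 ≤ r →
      μ (Metric.closedBall x r ∩ Ω) ≤ ENNReal.ofReal (C_bp * r ^ 2)) :
    (C.card : ℝ) ≤ C_bb * C_ov * C_bp * (3 / 2 + 1 / η₂) ^ 2 * κ ^ 2 * d ^ 2 := by
  set R := d + κ * d ^ 2 / η₂ + d / 2
  have hR : 0 ≤ R := by positivity
  have hsub : ⋃ s ∈ C, B s ∩ Ω ⊆ Metric.closedBall m R ∩ Ω := by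
    refine Set.iUnion₂_subset fun s hs => ?_
    obtain ⟨x, hx, y, hy, hxy⟩ := hnear s hs
    have hyx : dist y x ≤ κ * d ^ 2 / η₂ := by rw [dist_eq_norm, norm_sub_rev]; exact hxy.le
    exact Set.inter_subset_inter_left Ω
      (Metric.subset_closedBall_of_dist_le (hmid x hx) hyx hy (hdiam s hs))
  have hovΩ : ∀ x ∈ ⋃ s ∈ C, B s ∩ Ω, {s | s ∈ C ∧ x ∈ B s ∩ Ω}.ncard ≤ C_ov := by
    intro x hx
    have hxΩ : x ∈ Ω := (hsub hx).2
    simpa [hxΩ] using hov x hxΩ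
  have hcount : #C * d ^ 2 ≤ C_bb * (C_ov * (C_bp * R ^ 2)) :=
    card_mul_le_mul_of_ofReal_le μ (fun s hs => (hBmeas s hs).inter hΩ) hovΩ hCbb.le
      (by positivity) hcurv ((measure_mono hsub).trans (hball m R hR))
  have hRle : R ≤ (3 / 2 + 1 / η₂) * κ * d ^ 2 := by
    have hd_le : d ≤ κ * d ^ 2 := by nlinarith
    have hdiv : κ * d ^ 2 / η₂ = 1 / η₂ * κ * d ^ 2 := by ring
    simp only [R]
    linarith
  refine le_of_mul_le_mul_right ?_ (by positivity : 0 < d ^ 2)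
  calc #C * d ^ 2 ≤ C_bb * (C_ov * (C_bp * R ^ 2)) := hcount
    _ ≤ C_bb * (C_ov * (C_bp * ((3 / 2 + 1 / η₂) * κ * d ^ 2) ^ 2)) := by gcongr
    _ = _ := by ring

/-- High-frequency conclusion of Lemma 5.1 (Sparsity): in the regime `κ d > 1`,
the set `C` of clusters whose bounding boxes (common diameter `d`) violate the
parabolic admissibility condition with respect to a box `A` with midpoint `m`
and diameter `d` has cardinality at most
`C_bb C_ov C_bp (3/2 + 1/η₂)² κ² d²`. -/
theorem sparsity_highfreq {ι : Type*} (μ : Measure (EuclideanSpace ℝ (Fin 3)))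
    (Ω : Set (EuclideanSpace ℝ (Fin 3))) (hΩ : MeasurableSet Ω)
    (C : Finset ι) (A : Set (EuclideanSpace ℝ (Fin 3))) (hA : A.Nonempty)
    (B : ι → Set (EuclideanSpace ℝ (Fin 3)))
    (hBne : ∀ s ∈ C, (B s).Nonempty) (hBmeas : ∀ s ∈ C, MeasurableSet (B s))
    (m : EuclideanSpace ℝ (Fin 3))
    (d η₂ κ C_bb C_bp : ℝ) (hd : 0 < d) (hη : 0 < η₂) (hκ : 0 < κ) (hκd : 1 < κ * d)
    (hCbb : 0 < C_bb) (hCbp : 0 < C_bp) (C_ov : ℕ)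
    (hmid : ∀ x ∈ A, dist x m ≤ d / 2)
    (hdiam : ∀ s ∈ C, ∀ z ∈ B s, ∀ z' ∈ B s, dist z z' ≤ d)
    (hcurv : ∀ s ∈ C, ENNReal.ofReal (d ^ 2) ≤ ENNReal.ofReal C_bb * μ (B s ∩ Ω))
    (hnear : ∀ s ∈ C, ∃ x ∈ A, ∃ y ∈ B s, ‖x - y‖ < κ * d ^ 2 / η₂)
    (hov : ∀ x ∈ Ω, ({s | s ∈ C ∧ x ∈ B s}).ncard ≤ C_ov)
    (hball : ∀ (x : EuclideanSpace ℝ (Fin 3)) (r : ℝ), 0 ≤ r →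
      μ (Metric.closedBall x r ∩ Ω) ≤ ENNReal.ofReal (C_bp * r ^ 2)) :
    (C.card : ℝ) ≤ C_bb * C_ov * C_bp * (3 / 2 + 1 / η₂) ^ 2 * κ ^ 2 * d ^ 2 :=
  sparsity_highfreq_general μ Ω hΩ C A B hBmeas m d η₂ κ C_bb C_bp hd hη hκ hκd hCbb hCbp C_ov hmid
    hdiam hcurv hnear hov hball
end
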